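/- Let Ψ_{ABCD} ∈ Sym⁴ be in type D normal form with scalar ψ ≠ 0 and dyad (α_A, β_A), i.e. α_Q β^Q = 1 and Ψ_{ABCD} = −ψ α_{(A} α_B β_C β_{D)}. For any symmetric spinor ζ_{AB} ∈ Sym², define Ξ ≡ −ψ^{−1} Ψ_{PQRS} ζ^{PQ} ζ^{RS} − (1/6) ζ_{PQ} ζ^{PQ}. Then there exists μ ∈ ℂ with μ² = Ξ such that −ψ^{−1} Ψ_{ABPQ} ζ^{PQ} − (1/6) ζ_{AB} = μ α_{(A} β_{B)}. Consequently, if Ξ ≠ 0 and Ξ^{1/2} denotes either square root of Ξ, the Killing spinor candidate κ̆_{AB} = ψ^{−1/3} Ξ^{−1/2} ( −ψ^{−1} Ψ_{ABPQ} ζ^{PQ} − (1/6) ζ_{AB} ) equals ± ψ^{−1/3} α_{(A} β_{B)}; in particular κ̆_{AB} is independent of the choice of ζ_{AB} up to sign. -/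
import Mathlib


open scoped BigOperators

noncomputable section

/-- One-index spinors (lower index): elements of S = ℂ². -/
abbrev Spinor := Fin 2 → ℂ

/-- Two-index spinors. -/
abbrev Spinor2 := Fin 2 → Fin 2 → ℂ

/-- Four-index spinors. -/
abbrev Spinor4 := Fin 2 → Fin 2 → Fin 2 → Fin 2 → ℂ

/-- The alternating spinor ε_{AB}, normalized by ε₀₁ = 1; the raised version
ε^{AB} has the same components. -/
def eps : Fin 2 → Fin 2 → ℂ := fun A B =>
  if A = 0 ∧ B = 1 then 1 else if A = 1 ∧ B = 0 then -1 else 0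

/-- Index raising on one-index spinors: ξ^A = ε^{AB} ξ_B. -/
def up1 (ξ : Spinor) : Spinor := fun A => ∑ B, eps A B * ξ B

/-- The contraction α_Q β^Q. -/
def contr1 (α β : Spinor) : ℂ := ∑ Q, α Q * up1 β Q

/-- Index raising on two-index spinors: ζ^{AB} = ε^{AA'} ε^{BB'} ζ_{A'B'}. -/
def up2 (ζ : Spinor2) : Spinor2 := fun A B => ∑ A', ∑ B', eps A A' * eps B B' * ζ A' B'

/-- The contraction ζ_{AB} η^{AB}. -/
def contr2 (ζ η : Spinor2) : ℂ := ∑ A, ∑ B, ζ A B * up2 η A B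

/-- Index raising on four-index spinors. -/
def up4 (Ψ : Spinor4) : Spinor4 := fun A B C D =>
  ∑ A', ∑ B', ∑ C', ∑ D', eps A A' * eps B B' * eps C C' * eps D D' * Ψ A' B' C' D'

/-- The symmetrized product α_{(A} β_{B)}. -/
def symPair (α β : Spinor) : Spinor2 := fun A B => (α A * β B + α B * β A) / 2

/-- Total symmetrization of a four-index object. -/
def sym4 (T : Spinor4) : Spinor4 := fun A B C D =>
  (∑ σ : Equiv.Perm (Fin 4),
    T (![A, B, C, D] (σ 0)) (![A, B, C, D] (σ 1)) (![A, B, C, D] (σ 2)) (![A, B, C, D] (σ 3))) / 24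

/-- The symmetrized product α_{(A} α_B β_C β_{D)}. -/
def symAABB (α β : Spinor) : Spinor4 := sym4 (fun A B C D => α A * α B * β C * β D)

/-- Total symmetry of a four-index spinor (membership in Sym⁴). -/
def TotallySymmetric4 (Ψ : Spinor4) : Prop :=
  ∀ A B C D, Ψ A B C D = Ψ B A C D ∧ Ψ A B C D = Ψ A C B D ∧ Ψ A B C D = Ψ A B D C

/-- The scalar Ξ ≡ −ψ⁻¹ Ψ_{PQRS} ζ^{PQ} ζ^{RS} − (1/6) ζ_{PQ} ζ^{PQ}. -/
def XiOf (ψ : ℂ) (Ψ : Spinor4) (ζ : Spinor2) : ℂ :=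
  -ψ⁻¹ * (∑ P, ∑ Q, ∑ R, ∑ S, Ψ P Q R S * up2 ζ P Q * up2 ζ R S)
    - (1 / 6) * contr2 ζ ζ

/-- The (unnormalized) Killing spinor candidate numerator
−ψ⁻¹ Ψ_{ABPQ} ζ^{PQ} − (1/6) ζ_{AB}. -/
def candNum (ψ : ℂ) (Ψ : Spinor4) (ζ : Spinor2) : Spinor2 := fun A B =>
  -ψ⁻¹ * (∑ P, ∑ Q, Ψ A B P Q * up2 ζ P Q) - (1 / 6) * ζ A B


def p0 : Equiv.Perm (Fin 4) := ⟨![0,1,2,3], ![0,1,2,3], by decide, by decide⟩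
def p1 : Equiv.Perm (Fin 4) := ⟨![0,1,3,2], ![0,1,3,2], by decide, by decide⟩
def p2 : Equiv.Perm (Fin 4) := ⟨![0,2,1,3], ![0,2,1,3], by decide, by decide⟩
def p3 : Equiv.Perm (Fin 4) := ⟨![0,2,3,1], ![0,3,1,2], by decide, by decide⟩
def p4 : Equiv.Perm (Fin 4) := ⟨![0,3,1,2], ![0,2,3,1], by decide, by decide⟩
def p5 : Equiv.Perm (Fin 4) := ⟨![0,3,2,1], ![0,3,2,1], by decide, by decide⟩
def p6 : Equiv.Perm (Fin 4) := ⟨![1,0,2,3], ![1,0,2,3], by decide, by decide⟩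
def p7 : Equiv.Perm (Fin 4) := ⟨![1,0,3,2], ![1,0,3,2], by decide, by decide⟩
def p8 : Equiv.Perm (Fin 4) := ⟨![1,2,0,3], ![2,0,1,3], by decide, by decide⟩
def p9 : Equiv.Perm (Fin 4) := ⟨![1,2,3,0], ![3,0,1,2], by decide, by decide⟩
def p10 : Equiv.Perm (Fin 4) := ⟨![1,3,0,2], ![2,0,3,1], by decide, by decide⟩
def p11 : Equiv.Perm (Fin 4) := ⟨![1,3,2,0], ![3,0,2,1], by decide, by decide⟩
def p12 : Equiv.Perm (Fin 4) := ⟨![2,0,1,3], ![1,2,0,3], by decide, by decide⟩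
def p13 : Equiv.Perm (Fin 4) := ⟨![2,0,3,1], ![1,3,0,2], by decide, by decide⟩
def p14 : Equiv.Perm (Fin 4) := ⟨![2,1,0,3], ![2,1,0,3], by decide, by decide⟩
def p15 : Equiv.Perm (Fin 4) := ⟨![2,1,3,0], ![3,1,0,2], by decide, by decide⟩
def p16 : Equiv.Perm (Fin 4) := ⟨![2,3,0,1], ![2,3,0,1], by decide, by decide⟩
def p17 : Equiv.Perm (Fin 4) := ⟨![2,3,1,0], ![3,2,0,1], by decide, by decide⟩
def p18 : Equiv.Perm (Fin 4) := ⟨![3,0,1,2], ![1,2,3,0], by decide, by decide⟩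
def p19 : Equiv.Perm (Fin 4) := ⟨![3,0,2,1], ![1,3,2,0], by decide, by decide⟩
def p20 : Equiv.Perm (Fin 4) := ⟨![3,1,0,2], ![2,1,3,0], by decide, by decide⟩
def p21 : Equiv.Perm (Fin 4) := ⟨![3,1,2,0], ![3,1,2,0], by decide, by decide⟩
def p22 : Equiv.Perm (Fin 4) := ⟨![3,2,0,1], ![2,3,1,0], by decide, by decide⟩
def p23 : Equiv.Perm (Fin 4) := ⟨![3,2,1,0], ![3,2,1,0], by decide, by decide⟩

lemma perm4_univ : (Finset.univ : Finset (Equiv.Perm (Fin 4))).val = Multiset.ofList [p0, p1, p2, p3, p4, p5, p6, p7, p8, p9, p10, p11, p12, p13, p14, p15, p16, p17, p18, p19, p20, p21, p22, p23] := by decide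

lemma sum_perm4 (f : Equiv.Perm (Fin 4) → ℂ) : ∑ σ, f σ = f p0 + f p1 + f p2 + f p3 + f p4 + f p5 + f p6 + f p7 + f p8 + f p9 + f p10 + f p11 + f p12 + f p13 + f p14 + f p15 + f p16 + f p17 + f p18 + f p19 + f p20 + f p21 + f p22 + f p23 := by
  show (Multiset.map f Finset.univ.val).sum = _
  rw [perm4_univ]
  simp only [Multiset.map_coe, Multiset.sum_coe, List.map, List.sum_cons, List.sum_nil]
  ring

lemma sym4_eval (T : Spinor4) (A B C D : Fin 2) :
    sym4 T A B C D = (T A B C D + T A B D C + T A C B D + T A C D B + T A D B C + T A D C B + T B A C D + T B A D C + T B C A D + T B C D A + T B D A C + T B D C A + T C A B D + T C A D B + T C B A D + T C B D A + T C D A B + T C D B A + T D A B C + T D A C B + T D B A C + T D B C A + T D C A B + T D C B A) / 24 := by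
  unfold sym4
  rw [sum_perm4]
  simp only [p0, p1, p2, p3, p4, p5, p6, p7, p8, p9, p10, p11, p12, p13, p14, p15, p16, p17, p18, p19, p20, p21, p22, p23, Equiv.coe_fn_mk,
    Matrix.cons_val_zero, Matrix.cons_val_one, Matrix.head_cons,
    Matrix.cons_val_two, Matrix.tail_cons, Matrix.cons_val_three]

/-- The value μ = α_C β_D ζ^{CD} in components. -/
def muOf (α β : Spinor) (ζ : Spinor2) : ℂ :=
  α 1 * β 1 * ζ 0 0 - α 1 * β 0 * ζ 0 1 - α 0 * β 1 * ζ 0 1 + α 0 * β 0 * ζ 1 1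

/-- for Ψ in type D normal form with scalar ψ ≠ 0 and dyad (α, β),
and any symmetric ζ_{AB}, there is μ with μ² = Ξ and
−ψ⁻¹ Ψ_{ABPQ} ζ^{PQ} − (1/6) ζ_{AB} = μ α_{(A} β_{B)}; consequently if Ξ ≠ 0
and s is either square root of Ξ, the Killing spinor candidate
κ̆_{AB} = ψ^{−1/3} s⁻¹ (−ψ⁻¹ Ψ_{ABPQ} ζ^{PQ} − (1/6) ζ_{AB}) equals
± ψ^{−1/3} α_{(A} β_{B)} (so it is independent of ζ up to sign). Here the
fixed cube root q of ψ realises ψ^{−1/3} = q⁻¹. -/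
theorem candidate_independence (α β : Spinor) (hdyad : contr1 α β = 1)
    (ψ q : ℂ) (hψ : ψ ≠ 0) (hq : q ^ 3 = ψ) (Ψ : Spinor4)
    (hΨ : ∀ A B C D, Ψ A B C D = -ψ * symAABB α β A B C D)
    (ζ : Spinor2) (hζ : ∀ A B, ζ A B = ζ B A) :
    ∃ μ : ℂ, μ ^ 2 = XiOf ψ Ψ ζ ∧
      (∀ A B, candNum ψ Ψ ζ A B = μ * symPair α β A B) ∧
      (∀ s : ℂ, s ^ 2 = XiOf ψ Ψ ζ → XiOf ψ Ψ ζ ≠ 0 →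
        (∀ A B, q⁻¹ * s⁻¹ * candNum ψ Ψ ζ A B = q⁻¹ * symPair α β A B) ∨
        (∀ A B, q⁻¹ * s⁻¹ * candNum ψ Ψ ζ A B = -(q⁻¹) * symPair α β A B)) := by

  have hq0 : q ≠ 0 := by
    intro h; apply hψ; rw [← hq, h]; ring
  have hd : α 0 * β 1 - α 1 * β 0 = 1 := by
    have h := hdyad
    simp only [contr1, up1, eps, Fin.sum_univ_two] at h
    norm_num at h
    linear_combination h
  have hζ10 : ζ 1 0 = ζ 0 1 := hζ 1 0
  have e00 : eps 0 0 = 0 := by norm_num [eps]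
  have e01 : eps 0 1 = 1 := by norm_num [eps]
  have e10 : eps 1 0 = -1 := by norm_num [eps]
  have e11 : eps 1 1 = 0 := by norm_num [eps]
  have key : ∀ A B, candNum ψ Ψ ζ A B
      = (∑ P, ∑ Q, symAABB α β A B P Q * up2 ζ P Q) - (1 / 6) * ζ A B := by
    intro A B
    unfold candNum
    simp only [hΨ, Fin.sum_univ_two]
    field_simp
    ring
  have keyXi : XiOf ψ Ψ ζ
      = (∑ P, ∑ Q, ∑ R, ∑ S, symAABB α β P Q R S * up2 ζ P Q * up2 ζ R S)
        - (1 / 6) * contr2 ζ ζ := by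
    unfold XiOf
    simp only [hΨ, Fin.sum_univ_two]
    field_simp
    ring
  have hμ2 : muOf α β ζ ^ 2 = XiOf ψ Ψ ζ := by
    rw [keyXi]
    simp only [symAABB, sym4_eval, up2, contr2, up1, Fin.sum_univ_two,
      e00, e01, e10, e11, hζ10, muOf]
    linear_combination ((1 : ℂ)/3 * (ζ 0 1 * ζ 0 1 - ζ 0 0 * ζ 1 1)
      * (1 + α 0 * β 1 - α 1 * β 0)) * hd
  have hcand : ∀ A B, candNum ψ Ψ ζ A B = muOf α β ζ * symPair α β A B := by
    intro A B
    rw [key]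
    fin_cases A <;> fin_cases B <;>
      simp only [symAABB, sym4_eval, up2, symPair, Fin.sum_univ_two,
        Fin.mk_zero, Fin.mk_one, Fin.isValue, e00, e01, e10, e11, hζ10, muOf]
    · linear_combination ((1 : ℂ)/6 * ζ 0 0 * (1 + α 0 * β 1 - α 1 * β 0)) * hd
    · linear_combination ((1 : ℂ)/6 * ζ 0 1 * (1 + α 0 * β 1 - α 1 * β 0)) * hd
    · linear_combination ((1 : ℂ)/6 * ζ 0 1 * (1 + α 0 * β 1 - α 1 * β 0)) * hd
    · linear_combination ((1 : ℂ)/6 * ζ 1 1 * (1 + α 0 * β 1 - α 1 * β 0)) * hd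
  refine ⟨muOf α β ζ, hμ2, hcand, ?_⟩
  intro s hs hΞ
  have hμ0 : muOf α β ζ ≠ 0 := by
    intro h
    apply hΞ
    rw [← hμ2, h]
    ring
  have hfac : (s - muOf α β ζ) * (s + muOf α β ζ) = 0 := by
    linear_combination hs - hμ2
  rcases mul_eq_zero.mp hfac with h | h
  · left
    intro A B
    rw [hcand A B, sub_eq_zero.mp h]
    field_simp
  · right
    intro A B
    rw [hcand A B, eq_neg_of_add_eq_zero_left h]
    field_simp
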